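/- arXiv:math/0302090 — 2 statements merged into one kernel-verified Lean document; each statement's English description precedes it below -/
import Mathlib

section
/- Let h be a function holomorphic on the half-plane {z ∈ ℂ : Re(z) > 0} such that h(n) = 0 for every positive integer n. If there exist constants K and m with |h(z)| ≤ K e^{m Re(z)} for all z with Re(z) > 0, then h is identically zero on the half-plane. -/
/-!
Replacing `h` by `g w = exp (-m w) h w` we may assume `‖g‖ ≤ K` on the half-plane. Dividing `g` by
the Blaschke factors `(w - n) / (w + n)`, `1 ≤ n ≤ k`, which have modulus one on the imaginary
axis, preserves the bound `K` by the Phragmén–Lindelöf principle, so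
`‖g z‖ ≤ K ∏_{n ≤ k} ‖z - n‖ / ‖z + n‖`. Each factor is at most `exp (-c / n)` for some `c > 0`
depending on `z`, so the product tends to zero because the harmonic series diverges.
-/

open Complex Filter Topology ComplexConjugate

theorem DiffContOnCl.dslope {E : Type*} [NormedAddCommGroup E] [NormedSpace ℂ E]
    [CompleteSpace E] {f : ℂ → E} {U : Set ℂ} {a : ℂ} (hf : DiffContOnCl ℂ f U) (hU : IsOpen U)
    (ha : a ∈ U) : DiffContOnCl ℂ (dslope f a) U :=
  ⟨(Complex.differentiableOn_dslope (hU.mem_nhds ha)).2 hf.1,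
    (continuousOn_dslope (mem_of_superset (hU.mem_nhds ha) subset_closure)).2
      ⟨hf.2, hf.1.differentiableAt (hU.mem_nhds ha)⟩⟩

theorem norm_eq_norm_sub_mul_norm_dslope {𝕜 E : Type*} [NontriviallyNormedField 𝕜]
    [NormedAddCommGroup E] [NormedSpace 𝕜 E] {f : 𝕜 → E} {a : 𝕜} (hfa : f a = 0) (w : 𝕜) :
    ‖f w‖ = ‖w - a‖ * ‖dslope f a w‖ := by
  rw [← norm_smul, sub_smul_dslope, hfa, sub_zero]

namespace Complex

theorem norm_add_conj_le_two_mul_norm_sub {w a : ℂ} (h : 3 * ‖a‖ ≤ ‖w‖) :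
    ‖w + conj a‖ ≤ 2 * ‖w - a‖ := by
  have h₁ := norm_add_le w (conj a)
  have h₂ := norm_sub_norm_le w a
  rw [norm_conj] at h₁
  linarith

theorem norm_ofReal_mul_I_add_conj (y : ℝ) (a : ℂ) : ‖y * I + conj a‖ = ‖y * I - a‖ := by
  rw [← norm_conj, ← norm_neg]
  congr 1
  simp only [map_add, map_mul, conj_ofReal, conj_I, conj_conj]
  ring

theorem norm_add_conj_pos {w a : ℂ} (hw : 0 ≤ w.re) (ha : 0 < a.re) : 0 < ‖w + conj a‖ :=
  norm_pos_iff.2 fun h => by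
    have := congrArg re h
    simp only [add_re, conj_re, zero_re] at this
    linarith

theorem norm_sub_ofReal_div_norm_add_le_exp {z : ℂ} (hz : 0 < z.re) {t : ℝ} (ht : 1 ≤ t) :
    ‖z - t‖ / ‖z + t‖ ≤ Real.exp (-(2 * z.re / (‖z‖ + 1) ^ 2) / t) := by
  set c := 2 * z.re / (‖z‖ + 1) ^ 2
  have hzt : 0 < ‖z + t‖ := by simpa using norm_add_conj_pos hz.le (a := t) (by simp; linarith)
  have hnorm : ‖z - t‖ ^ 2 = ‖z + t‖ ^ 2 - 4 * t * z.re := by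
    simp only [Complex.sq_norm, normSq_apply, add_re, sub_re, add_im, sub_im, ofReal_re,
      ofReal_im]
    ring
  have hzt_le : ‖z + t‖ ≤ (‖z‖ + 1) * t :=
    calc ‖z + t‖ ≤ ‖z‖ + t := by simpa [abs_of_pos (by linarith : 0 < t)] using norm_add_le z t
      _ ≤ (‖z‖ + 1) * t := by nlinarith [norm_nonneg z]
  have hsq : (‖z - t‖ / ‖z + t‖) ^ 2 ≤ 1 - 2 * c / t := by
    have hc : 2 * c / t = 4 * t * z.re / ((‖z‖ + 1) * t) ^ 2 := by
      simp only [c]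
      field_simp
      norm_num
    rw [div_pow, hnorm, sub_div, div_self (by positivity), hc]
    gcongr
  have hexp : 1 - 2 * c / t ≤ Real.exp (-c / t) ^ 2 := by
    rw [← Real.exp_nat_mul]
    convert Real.add_one_le_exp (-(2 * c / t)) using 2 <;> ring
  exact (pow_le_pow_iff_left₀ (by positivity) (by positivity) two_ne_zero).1 (hsq.trans hexp)

theorem tendsto_prod_norm_sub_div_norm_add_natCast {z : ℂ} (hz : 0 < z.re) :
    Tendsto (fun k => ∏ n ∈ Finset.range k, ‖z - (n + 1)‖ / ‖z + (n + 1)‖) atTop (𝓝 0) := by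
  set c := 2 * z.re / (‖z‖ + 1) ^ 2
  have hc : 0 < c := by positivity
  refine squeeze_zero (fun k => Finset.prod_nonneg fun n _ => by positivity) (fun k => ?_)
    (Real.tendsto_exp_atBot.comp
      (Real.tendsto_sum_range_one_div_nat_succ_atTop.const_mul_atTop_of_neg (neg_neg_of_pos hc)))
  calc ∏ n ∈ Finset.range k, ‖z - (n + 1)‖ / ‖z + (n + 1)‖
      ≤ ∏ n ∈ Finset.range k, Real.exp (-c / (n + 1)) := by
        refine Finset.prod_le_prod (fun n _ => by positivity) fun n _ => ?_
        exact_mod_cast norm_sub_ofReal_div_norm_add_le_exp hz (t := n + 1) (by simp)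
    _ = Real.exp (-c * ∑ n ∈ Finset.range k, 1 / ((n : ℝ) + 1)) := by
        rw [Finset.mul_sum, Real.exp_sum]
        simp only [div_eq_mul_inv, one_mul]

end Complex

namespace RightHalfPlane

variable {E : Type*} [NormedAddCommGroup E] [NormedSpace ℂ E] [CompleteSpace E]

theorem diffContOnCl_add_conj_smul_dslope {f : ℂ → E} (hf : DiffContOnCl ℂ f {w | 0 < w.re})
    {a : ℂ} (ha : 0 < a.re) :
    DiffContOnCl ℂ (fun w => (w + conj a) • dslope f a w) {w | 0 < w.re} :=
  (differentiable_id.add_const _).diffContOnCl.smul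
    (hf.dslope (isOpen_lt continuous_const continuous_re) ha)

/-- The Blaschke factor `(w - a) / (w + conj a)` has modulus one on the imaginary axis, so by
Phragmén–Lindelöf dividing by it does not increase the sup norm. -/
theorem norm_add_conj_smul_dslope_le {f : ℂ → E} {K : ℝ} (hf : DiffContOnCl ℂ f {w | 0 < w.re})
    (hK : ∀ w : ℂ, 0 ≤ w.re → ‖f w‖ ≤ K) {a : ℂ} (ha : 0 < a.re) (hfa : f a = 0)
    {w : ℂ} (hw : 0 ≤ w.re) : ‖(w + conj a) • dslope f a w‖ ≤ K := by
  have far : ∀ u : ℂ, 0 ≤ u.re → 3 * ‖a‖ ≤ ‖u‖ → ‖(u + conj a) • dslope f a u‖ ≤ 2 * K := by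
    intro u hu hau
    calc ‖(u + conj a) • dslope f a u‖ ≤ 2 * ‖u - a‖ * ‖dslope f a u‖ := by
          rw [norm_smul]
          gcongr
          exact norm_add_conj_le_two_mul_norm_sub hau
      _ = 2 * ‖f u‖ := by rw [norm_eq_norm_sub_mul_norm_dslope hfa, mul_assoc]
      _ ≤ 2 * K := by linarith [hK u hu]
  refine PhragmenLindelof.right_half_plane_of_bounded_on_real
    (diffContOnCl_add_conj_smul_dslope hf ha) ⟨1, one_lt_two, 0, ?_⟩ ?_ (fun y => ?_) hw
  · refine Asymptotics.IsBigO.of_bound (2 * K) ?_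
    filter_upwards [(eventually_cobounded_le_norm (3 * ‖a‖)).filter_mono inf_le_left,
      mem_inf_of_right (mem_principal_self _)] with u hau hu
    simpa using far u (le_of_lt hu) hau
  · refine isBoundedUnder_of_eventually_le (a := 2 * K) ?_
    filter_upwards [eventually_ge_atTop (3 * ‖a‖)] with x hx
    have hx₀ : 0 ≤ x := (by positivity : 0 ≤ 3 * ‖a‖).trans hx
    exact far x (by simpa using hx₀) (by simpa [abs_of_nonneg hx₀] using hx)
  · rw [norm_smul, norm_ofReal_mul_I_add_conj, ← norm_eq_norm_sub_mul_norm_dslope hfa]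
    exact hK _ (by simp)

theorem norm_le_mul_prod_of_diffContOnCl {f : ℂ → E} {K : ℝ}
    (hf : DiffContOnCl ℂ f {w | 0 < w.re}) (hK : ∀ w : ℂ, 0 ≤ w.re → ‖f w‖ ≤ K)
    {s : Finset ℂ} (hs : ∀ a ∈ s, 0 < a.re) (hfs : ∀ a ∈ s, f a = 0) {w : ℂ} (hw : 0 ≤ w.re) :
    ‖f w‖ ≤ K * ∏ a ∈ s, ‖w - a‖ / ‖w + conj a‖ := by
  induction s using Finset.induction_on generalizing f with
  | empty => simpa using hK w hw
  | insert a s has ih =>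
    have ha : 0 < a.re := hs a (Finset.mem_insert_self a s)
    have hfa : f a = 0 := hfs a (Finset.mem_insert_self a s)
    have hg := ih (diffContOnCl_add_conj_smul_dslope hf ha)
      (fun u hu => norm_add_conj_smul_dslope_le hf hK ha hfa hu)
      (fun b hb => hs b (Finset.mem_insert_of_mem hb)) (fun b hb => ?_)
    · rw [norm_smul] at hg
      have hwa := norm_add_conj_pos hw ha
      rw [Finset.prod_insert has, norm_eq_norm_sub_mul_norm_dslope hfa]
      calc ‖w - a‖ * ‖dslope f a w‖
          = ‖w - a‖ / ‖w + conj a‖ * (‖w + conj a‖ * ‖dslope f a w‖) := by field_simp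
        _ ≤ ‖w - a‖ / ‖w + conj a‖ * (K * ∏ b ∈ s, ‖w - b‖ / ‖w + conj b‖) := by gcongr
        _ = _ := by ring
    · have hba : b ≠ a := ne_of_mem_of_not_mem hb has
      simp [dslope_of_ne _ hba, slope_def_module, hfa, hfs b (Finset.mem_insert_of_mem hb)]

theorem norm_le_mul_prod_of_differentiableOn {f : ℂ → E} {K : ℝ}
    (hf : DifferentiableOn ℂ f {w | 0 < w.re}) (hK : ∀ w : ℂ, 0 < w.re → ‖f w‖ ≤ K)
    {s : Finset ℂ} (hs : ∀ a ∈ s, 0 < a.re) (hfs : ∀ a ∈ s, f a = 0) {w : ℂ} (hw : 0 < w.re) :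
    ‖f w‖ ≤ K * ∏ a ∈ s, ‖w - a‖ / ‖w + conj a‖ := by
  -- `f (· + ε)` is continuous up to the imaginary axis; let `ε → 0`.
  have shifted : ∀ ε : ℝ, 0 < ε → ε < w.re → (∀ a ∈ s, ε < a.re) →
      ‖f w‖ ≤ K * ∏ a ∈ s, ‖w - a‖ / ‖w + conj a - 2 * ε‖ := by
    intro ε hε hεw hεs
    have hfε : DiffContOnCl ℂ (fun u => f (u + ε)) {u | 0 < u.re} := by
      refine DifferentiableOn.diffContOnCl
        (hf.comp (differentiable_id.add_const _).differentiableOn fun u hu => ?_)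
      rw [closure_setOfPred_lt_re] at hu
      simp only [Set.mem_ofPred_eq, add_re, ofReal_re] at hu ⊢
      linarith
    have := norm_le_mul_prod_of_diffContOnCl hfε (fun u hu => hK _ (by simp; linarith))
      (s := s.image (· - (ε : ℂ))) (by simpa using hεs) (by simpa using hfs)
      (w := w - ε) (by simp; linarith)
    simp only [Finset.prod_image sub_left_injective.injOn, sub_add_cancel,
      sub_sub_sub_cancel_right, map_sub, conj_ofReal] at this
    convert this using 5
    ring
  have hlim : Tendsto (fun ε : ℝ => K * ∏ a ∈ s, ‖w - a‖ / ‖w + conj a - 2 * ε‖) (𝓝[>] 0)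
      (𝓝 (K * ∏ a ∈ s, ‖w - a‖ / ‖w + conj a‖)) := by
    refine (tendsto_const_nhds.mul (tendsto_finsetProd s fun a ha => tendsto_const_nhds.div
      ?_ (norm_add_conj_pos hw.le (hs a ha)).ne')).mono_left nhdsWithin_le_nhds
    exact Continuous.tendsto' (by fun_prop) _ _ (by simp)
  refine ge_of_tendsto hlim ?_
  filter_upwards [self_mem_nhdsWithin, eventually_nhdsWithin_of_eventually_nhds
    (eventually_lt_nhds hw), eventually_nhdsWithin_of_eventually_nhds
    ((eventually_all_finset s).2 fun a ha => eventually_lt_nhds (hs a ha))] with ε hε hεw hεs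
  exact shifted ε hε hεw hεs

end RightHalfPlane

/-- Corollary of Carleson's theorem: a function holomorphic on the right half-plane,
bounded by `K e^{m Re z}`, which vanishes at every positive integer, vanishes identically
on the half-plane. -/
theorem carleson_vanishing
    (h : ℂ → ℂ) (hd : DifferentiableOn ℂ h {z : ℂ | 0 < z.re})
    (hzero : ∀ n : ℕ, 0 < n → h (n : ℂ) = 0)
    (K m : ℝ) (hb : ∀ z : ℂ, 0 < z.re → ‖h z‖ ≤ K * Real.exp (m * z.re)) :
    ∀ z : ℂ, 0 < z.re → h z = 0 := by
  intro z hz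
  set g : ℂ → ℂ := fun w => cexp (-m * w) * h w
  have hgd : DifferentiableOn ℂ g {w | 0 < w.re} :=
    ((differentiable_id.const_mul _).cexp.differentiableOn).mul hd
  have hgK : ∀ w : ℂ, 0 < w.re → ‖g w‖ ≤ K := fun w hw =>
    calc ‖g w‖ = Real.exp (-(m * w.re)) * ‖h w‖ := by simp [g, norm_exp]
      _ ≤ Real.exp (-(m * w.re)) * (K * Real.exp (m * w.re)) := by gcongr; exact hb w hw
      _ = K := by rw [mul_left_comm, ← Real.exp_add, neg_add_cancel, Real.exp_zero, mul_one]
  have hbound : ∀ k, ‖g z‖ ≤ K * ∏ n ∈ Finset.range k, ‖z - (n + 1)‖ / ‖z + (n + 1)‖ := by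
    intro k
    have := RightHalfPlane.norm_le_mul_prod_of_differentiableOn hgd hgK
      (s := (Finset.range k).image fun n : ℕ => (n : ℂ) + 1)
      (Finset.forall_mem_image.2 fun n _ => by simp only [add_re, natCast_re, one_re]; positivity)
      (Finset.forall_mem_image.2 fun n _ => by simpa [g] using hzero (n + 1) n.succ_pos) hz
    simpa [Finset.prod_image fun a _ b _ hab => by simpa using hab] using this
  have hgz : ‖g z‖ ≤ 0 := ge_of_tendsto'
    (by simpa using (tendsto_prod_norm_sub_div_norm_add_natCast hz).const_mul K) hbound
  simpa [g, exp_ne_zero] using norm_le_zero_iff.1 hgz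
end

section
/- For every real number a > 0, log a = ∫_0^1 (a−1)/((a−1)t + 1) dt. Consequently, if C ⊆ ℝ^n is a compact set, f is a continuous function on C that is strictly positive μ-almost everywhere and non-negative on C, g is continuous on C, s_0 > 0 is real, and l is a non-negative integer, then ∫_{C × [0,1]^l} f(x)^{s_0} ∏_{i=1}^l [(f(x)−1)/((f(x)−1)t_i + 1)] g(x) dμ(x) dt_1⋯dt_l = ∫_C f(x)^{s_0} (log f(x))^l g(x) dμ(x), with integrands interpreted as 0 where f vanishes. -/
/-!
The first identity is the fundamental theorem of calculus for `t ↦ log ((a - 1) t + 1)`.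
For the second, the integral over the cube of a product of `l` kernels factors into the
`l`-th power of the one-dimensional integral, which is `log (f x)`. The kernel has constant
sign, so the same factorisation computes the fibre integrals of the absolute value as
`f x ^ s₀ * |log (f x)| ^ l * |g x|`; this is bounded on `C` because `a ^ s₀ * |log a| ^ l`
stays bounded as `a → 0⁺`, and Fubini's theorem applies.
-/

open MeasureTheory Set Real

noncomputable def logKernel (a t : ℝ) : ℝ := (a - 1) / ((a - 1) * t + 1)

lemma sub_one_mul_add_one_pos {a t : ℝ} (ha : 0 < a) (ht : t ∈ Icc (0 : ℝ) 1) :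
    0 < (a - 1) * t + 1 := by
  nlinarith [mul_nonneg ha.le ht.1, ht.2, mul_pos ha zero_lt_one]

lemma continuousOn_logKernel {a : ℝ} (ha : 0 < a) : ContinuousOn (logKernel a) (Icc 0 1) :=
  continuousOn_const.div (by fun_prop) fun _ ht => (sub_one_mul_add_one_pos ha ht).ne'

lemma intervalIntegral_logKernel {a : ℝ} (ha : 0 < a) :
    ∫ t in (0 : ℝ)..1, logKernel a t = log a := by
  have hderiv : ∀ t ∈ uIcc (0 : ℝ) 1,
      HasDerivAt (fun t => log ((a - 1) * t + 1)) (logKernel a t) t := by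
    intro t ht
    rw [uIcc_of_le zero_le_one] at ht
    simpa [logKernel, div_eq_inv_mul] using
      (((hasDerivAt_id t).const_mul (a - 1)).add_const 1).log (sub_one_mul_add_one_pos ha ht).ne'
  rw [intervalIntegral.integral_eq_sub_of_hasDerivAt hderiv
    ((continuousOn_logKernel ha).intervalIntegrable_of_Icc zero_le_one)]
  simp

lemma setIntegral_Icc_logKernel {a : ℝ} (ha : 0 < a) :
    ∫ t in Icc (0 : ℝ) 1, logKernel a t = log a := by
  rw [integral_Icc_eq_integral_Ioc, ← intervalIntegral.integral_of_le zero_le_one,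
    intervalIntegral_logKernel ha]

lemma setIntegral_Icc_abs_logKernel {a : ℝ} (ha : 0 < a) :
    ∫ t in Icc (0 : ℝ) 1, |logKernel a t| = |log a| := by
  rcases le_total 1 a with h | h
  · rw [abs_of_nonneg (log_nonneg h), ← setIntegral_Icc_logKernel ha]
    refine setIntegral_congr_fun measurableSet_Icc fun t ht => abs_of_nonneg ?_
    exact div_nonneg (by linarith) (sub_one_mul_add_one_pos ha ht).le
  · rw [abs_of_nonpos (log_nonpos ha.le h), ← setIntegral_Icc_logKernel ha, ← integral_neg]
    refine setIntegral_congr_fun measurableSet_Icc fun t ht => abs_of_nonpos ?_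
    exact div_nonpos_of_nonpos_of_nonneg (by linarith) (sub_one_mul_add_one_pos ha ht).le

theorem setIntegral_univ_pi_prod_eq_pow {ι E 𝕜 : Type*} [Fintype ι] [RCLike 𝕜]
    [MeasurableSpace E] (μ : Measure E) [SigmaFinite μ] (s : Set E) (h : E → 𝕜) :
    ∫ x in univ.pi fun _ : ι => s, ∏ i, h (x i) ∂(Measure.pi fun _ => μ) =
      (∫ x in s, h x ∂μ) ^ Fintype.card ι := by
  rw [Measure.restrict_pi_pi, integral_fintype_prod_eq_pow]

lemma rpow_mul_abs_log_pow_le {a s : ℝ} (ha : 0 < a) (ha1 : a ≤ 1) (hs : 0 < s) (l : ℕ) :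
    a ^ s * |log a| ^ l ≤ (l / s) ^ l := by
  rcases l.eq_zero_or_pos with rfl | hl
  · simpa using rpow_le_one ha.le ha1 hs.le
  have hsl : 0 < s / l := by positivity
  have hsplit : a ^ s = (a ^ (s / l)) ^ l := by
    rw [← rpow_natCast, ← rpow_mul ha.le, div_mul_cancel₀ _ (by positivity)]
  calc a ^ s * |log a| ^ l = |log a * a ^ (s / l)| ^ l := by
        rw [hsplit, abs_mul, abs_of_nonneg (rpow_nonneg ha.le _), mul_pow, mul_comm]
    _ ≤ (1 / (s / l)) ^ l :=
        pow_le_pow_left₀ (abs_nonneg _) (abs_log_mul_self_rpow_lt a _ ha ha1 hsl).le l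
    _ = (l / s) ^ l := by rw [one_div_div]

lemma exists_rpow_mul_abs_log_pow_le {s : ℝ} (hs : 0 < s) (l : ℕ) (M : ℝ) :
    ∃ K, 0 ≤ K ∧ ∀ a, 0 < a → a ≤ M → a ^ s * |log a| ^ l ≤ K := by
  refine ⟨max ((l / s) ^ l) (M ^ s * log M ^ l), by positivity, fun a ha haM => ?_⟩
  rcases le_total a 1 with h | h
  · exact (rpow_mul_abs_log_pow_le ha h hs l).trans (le_max_left _ _)
  refine le_trans ?_ (le_max_right _ _)
  rw [abs_of_nonneg (log_nonneg h)]
  exact mul_le_mul (rpow_le_rpow ha.le haM hs.le)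
    (pow_le_pow_left₀ (log_nonneg h) (log_le_log ha haM) l) (pow_nonneg (log_nonneg h) l)
    (rpow_nonneg (ha.le.trans haM) s)

noncomputable def logPowerIntegrand (s : ℝ) (l : ℕ) (a b : ℝ) (t : Fin l → ℝ) : ℝ :=
  if a = 0 then 0 else a ^ s * (∏ i, logKernel a (t i)) * b

section logPowerIntegrand

variable {s a b : ℝ} {l : ℕ}

lemma measurable_logPowerIntegrand (s : ℝ) (l : ℕ) :
    Measurable fun p : (ℝ × ℝ) × (Fin l → ℝ) => logPowerIntegrand s l p.1.1 p.1.2 p.2 := by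
  refine Measurable.ite (measurableSet_eq_fun (by fun_prop) measurable_const) measurable_const ?_
  unfold logKernel
  fun_prop

lemma logPowerIntegrand_of_pos (ha : 0 < a) :
    logPowerIntegrand s l a b = fun t => a ^ s * b * ∏ i, logKernel a (t i) := by
  ext t
  rw [logPowerIntegrand, if_neg ha.ne']
  ring

lemma integrableOn_logPowerIntegrand (ha : 0 < a) :
    IntegrableOn (logPowerIntegrand s l a b) (univ.pi fun _ => Icc 0 1) := by
  rw [logPowerIntegrand_of_pos ha]
  refine ContinuousOn.integrableOn_compact (isCompact_univ_pi fun _ => isCompact_Icc) ?_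
  exact continuousOn_const.mul <| continuousOn_finsetProd _ fun i _ =>
    (continuousOn_logKernel ha).comp (continuous_apply i).continuousOn fun _ ht => ht i trivial

lemma setIntegral_logPowerIntegrand (ha : 0 < a) :
    ∫ t in univ.pi fun _ => Icc 0 1, logPowerIntegrand s l a b t = a ^ s * log a ^ l * b := by
  rw [logPowerIntegrand_of_pos ha, integral_const_mul, volume_pi, setIntegral_univ_pi_prod_eq_pow,
    setIntegral_Icc_logKernel ha, Fintype.card_fin]
  ring

lemma setIntegral_norm_logPowerIntegrand (ha : 0 < a) :
    ∫ t in univ.pi fun _ => Icc 0 1, ‖logPowerIntegrand s l a b t‖ =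
      a ^ s * |log a| ^ l * |b| := by
  simp_rw [logPowerIntegrand_of_pos ha, norm_mul, norm_prod, Real.norm_eq_abs]
  rw [integral_const_mul, volume_pi, setIntegral_univ_pi_prod_eq_pow _ _ fun t => |logKernel a t|,
    setIntegral_Icc_abs_logKernel ha, Fintype.card_fin, abs_of_pos (rpow_pos_of_pos ha s)]
  ring

theorem integral_prod_logPowerIntegrand {α : Type*} [MeasurableSpace α] {μ : Measure α}
    [SFinite μ] {f g : α → ℝ} (hf : AEMeasurable f μ) (hg : AEMeasurable g μ)
    (hfpos : ∀ᵐ x ∂μ, 0 < f x)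
    (hint : Integrable (fun x => f x ^ s * log (f x) ^ l * g x) μ) :
    ∫ z, logPowerIntegrand s l (f z.1) (g z.1) z.2
        ∂μ.prod (volume.restrict (univ.pi fun _ => Icc 0 1)) =
      ∫ x, f x ^ s * log (f x) ^ l * g x ∂μ := by
  set ν := volume.restrict (univ.pi fun _ : Fin l => Icc (0 : ℝ) 1)
  have hfg : AEMeasurable (fun z : α × (Fin l → ℝ) => ((f z.1, g z.1), z.2)) (μ.prod ν) :=
    ((hf.comp_quasiMeasurePreserving Measure.quasiMeasurePreserving_fst).prodMk
      (hg.comp_quasiMeasurePreserving Measure.quasiMeasurePreserving_fst)).prodMk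
      measurable_snd.aemeasurable
  have hF : AEStronglyMeasurable (fun z => logPowerIntegrand s l (f z.1) (g z.1) z.2) (μ.prod ν) :=
    ((measurable_logPowerIntegrand s l).comp_aemeasurable hfg).aestronglyMeasurable
  have hint_prod := (integrable_prod_iff hF).2
    ⟨by filter_upwards [hfpos] with x hx using integrableOn_logPowerIntegrand hx,
     hint.norm.congr <| by
      filter_upwards [hfpos] with x hx
      rw [setIntegral_norm_logPowerIntegrand hx, norm_mul, norm_mul, norm_pow, Real.norm_eq_abs,
        Real.norm_eq_abs, Real.norm_eq_abs, abs_of_pos (rpow_pos_of_pos hx s)]⟩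
  rw [integral_prod _ hint_prod]
  exact integral_congr_ae <| by
    filter_upwards [hfpos] with x hx using setIntegral_logPowerIntegrand hx

end logPowerIntegrand

theorem IsCompact.integrableOn_rpow_mul_log_pow_mul {X : Type*} [TopologicalSpace X] [T2Space X]
    [MeasurableSpace X] [OpensMeasurableSpace X] {μ : Measure X} [IsFiniteMeasureOnCompacts μ]
    {C : Set X} (hC : IsCompact C) {f g : X → ℝ} (hf : ContinuousOn f C) (hg : ContinuousOn g C)
    (hfpos : ∀ᵐ x ∂μ.restrict C, 0 < f x) {s : ℝ} (hs : 0 < s) (l : ℕ) :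
    IntegrableOn (fun x => f x ^ s * log (f x) ^ l * g x) C μ := by
  have hCm := hC.isClosed.measurableSet
  obtain ⟨Mf, hMf⟩ := hC.exists_bound_of_continuousOn hf
  obtain ⟨Mg, hMg⟩ := hC.exists_bound_of_continuousOn hg
  obtain ⟨K, hK, hKb⟩ := exists_rpow_mul_abs_log_pow_le hs l Mf
  have : IsFiniteMeasure (μ.restrict C) := isFiniteMeasure_restrict.2 hC.measure_lt_top.ne
  have hfm := hf.aemeasurable (μ := μ) hCm
  have hgm := hg.aemeasurable (μ := μ) hCm
  refine Integrable.of_bound (by fun_prop) (K * Mg) ?_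
  filter_upwards [hfpos, ae_restrict_mem hCm] with x hx hxC
  rw [norm_mul, norm_mul, norm_pow, Real.norm_eq_abs, Real.norm_eq_abs,
    abs_of_pos (rpow_pos_of_pos hx s)]
  exact mul_le_mul (hKb _ hx ((le_abs_self _).trans (hMf x hxC))) (hMg x hxC) (norm_nonneg _) hK

theorem log_as_integral_and_log_powers_general
    (n l : ℕ) (C : Set (Fin n → ℝ)) (hCcomp : IsCompact C)
    (f g : (Fin n → ℝ) → ℝ)
    (hfc : ContinuousOn f C)
    (hfpos : ∀ᵐ x ∂(volume.restrict C), 0 < f x)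
    (hgc : ContinuousOn g C)
    (s₀ : ℝ) (hs₀ : 0 < s₀) :
    (∀ a : ℝ, 0 < a → Real.log a = ∫ t in (0 : ℝ)..1, (a - 1) / ((a - 1) * t + 1)) ∧
    (∫ z in C ×ˢ (Set.univ.pi fun _ : Fin l => Set.Icc (0 : ℝ) 1),
        (if f z.1 = 0 then (0 : ℝ) else
          f z.1 ^ s₀ * (∏ i, (f z.1 - 1) / ((f z.1 - 1) * z.2 i + 1)) * g z.1)) =
      ∫ x in C, if f x = 0 then (0 : ℝ) else f x ^ s₀ * Real.log (f x) ^ l * g x := by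
  refine ⟨fun a ha => (intervalIntegral_logKernel ha).symm, ?_⟩
  have hCm : MeasurableSet C := hCcomp.isClosed.measurableSet
  rw [Measure.volume_eq_prod, ← Measure.prod_restrict]
  calc _ = ∫ x in C, f x ^ s₀ * log (f x) ^ l * g x :=
        integral_prod_logPowerIntegrand (hfc.aemeasurable hCm) (hgc.aemeasurable hCm) hfpos
          (hCcomp.integrableOn_rpow_mul_log_pow_mul hfc hgc hfpos hs₀ l)
    _ = _ := integral_congr_ae <| by
        filter_upwards [hfpos] with x hx using (if_neg hx.ne').symm

/-- For `a > 0`, `log a = ∫_0^1 (a-1)/((a-1)t+1) dt`; consequently the logarithm factors in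
the derivatives of the Igusa zeta function can be rewritten as integrals of rational
functions over a cube: for compact `C`, `f` continuous, non-negative on `C` and strictly
positive almost everywhere, `g` continuous, `s₀ > 0` and `l ∈ ℕ`,
`∫_{C×[0,1]^l} f(x)^{s₀} ∏ᵢ (f(x)-1)/((f(x)-1)tᵢ+1) g(x) = ∫_C f(x)^{s₀} (log f(x))^l g(x)`. -/
theorem log_as_integral_and_log_powers
    (n l : ℕ) (C : Set (Fin n → ℝ)) (hCcomp : IsCompact C)
    (f g : (Fin n → ℝ) → ℝ)
    (hfc : ContinuousOn f C) (hfnonneg : ∀ x ∈ C, 0 ≤ f x)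
    (hfpos : ∀ᵐ x ∂(volume.restrict C), 0 < f x)
    (hgc : ContinuousOn g C)
    (s₀ : ℝ) (hs₀ : 0 < s₀) :
    (∀ a : ℝ, 0 < a → Real.log a = ∫ t in (0 : ℝ)..1, (a - 1) / ((a - 1) * t + 1)) ∧
    (∫ z in C ×ˢ (Set.univ.pi fun _ : Fin l => Set.Icc (0 : ℝ) 1),
        (if f z.1 = 0 then (0 : ℝ) else
          f z.1 ^ s₀ * (∏ i, (f z.1 - 1) / ((f z.1 - 1) * z.2 i + 1)) * g z.1)) =
      ∫ x in C, if f x = 0 then (0 : ℝ) else f x ^ s₀ * Real.log (f x) ^ l * g x :=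
  log_as_integral_and_log_powers_general n l C hCcomp f g hfc hfpos hgc s₀ hs₀
end
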